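/- arXiv:0908.1106 — 3 statements merged into one kernel-verified Lean document; each statement's English description precedes it below -/
import Mathlib

section
/- Fix block data n₁, …, n_l, the grading group Gr and the grading gr of strand diagrams as in the context. Let (S, T, φ) and (T, V, ψ) be strand diagrams with inv(ψ∘φ) = inv(φ) + inv(ψ) (i.e., their product in the strands algebra A(n₁, …, n_l; k) is the nonzero generator (S, V, ψ∘φ)). Then gr((S, V, ψ∘φ)) = gr((S, T, φ)) · gr((T, V, ψ)) in Gr. Hence gr makes the strands algebra A(n₁, …, n_l; k) a Gr-graded algebra: the grading is multiplicative on nonzero products of generators. -/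
open Finset

attribute [local instance] Classical.propDecidable

noncomputable section

variable {l : ℕ}

/-- The total size of the first `r` blocks (`cum n l` is `N = n₁ + ⋯ + n_l`). -/
def cum (n : Fin l → ℕ) (r : ℕ) : ℕ :=
  ∑ s ∈ Finset.univ.filter (fun s : Fin l => (s : ℕ) < r), n s

/-- The 1-indexed block number of a point `i ∈ {1, …, N}`: consecutive blocks
`B₁, …, B_l` of sizes `n₁, …, n_l` partition `{1, …, N}`. -/
def blockOf (n : Fin l → ℕ) (i : ℕ) : ℕ :=
  ((Finset.range l).filter (fun r => cum n r < i)).card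

/-- A strand diagram for the block data `n₁, …, n_l`: a triple `(S, T, φ)` with
`S, T ⊆ {1, …, N}` and `φ : S → T` a bijection such that `φ(i) ≥ i` and `φ(i)` is
in the same block as `i`, for every `i ∈ S`.  The function `str` represents `φ`,
normalized to be the identity outside `S`. -/
structure StrandDiagram (n : Fin l → ℕ) where
  S : Finset ℕ
  T : Finset ℕ
  str : ℕ → ℕ
  S_sub : S ⊆ Finset.Icc 1 (cum n l)
  T_sub : T ⊆ Finset.Icc 1 (cum n l)
  bij : Set.BijOn str ↑S ↑T
  le_str : ∀ i ∈ S, i ≤ str i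
  block : ∀ i ∈ S, blockOf n (str i) = blockOf n i
  out : ∀ i ∉ S, str i = i

/-- The homology class `[φ] : {1, …, N−1} → ℤ`, `[φ](p) = #{i ∈ S : i ≤ p < φ(i)}`. -/
def hcl (S : Finset ℕ) (f : ℕ → ℕ) (p : ℕ) : ℤ :=
  ((S.filter fun i => i ≤ p ∧ p < f i).card : ℤ)

/-- `p ∈ {1, …, N−1}` is interior if `p` and `p+1` lie in the same block. -/
def Interior (n : Fin l → ℕ) (p : ℕ) : Prop :=
  1 ≤ p ∧ p + 1 ≤ cum n l ∧ blockOf n p = blockOf n (p + 1)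

/-- `h⁻(x) = h(x−1)` if `x−1` is interior, else `0`. -/
def hminus (n : Fin l → ℕ) (h : ℕ → ℤ) (x : ℕ) : ℤ :=
  if Interior n (x - 1) then h (x - 1) else 0

/-- `h⁺(x) = h(x)` if `x` is interior, else `0`. -/
def hplus (n : Fin l → ℕ) (h : ℕ → ℤ) (x : ℕ) : ℤ :=
  if Interior n x then h x else 0

/-- `m(X, h) = Σ_{x ∈ X} (h⁻(x) + h⁺(x))/2 ∈ ℚ`. -/
def mQ (n : Fin l → ℕ) (X : Finset ℕ) (h : ℕ → ℤ) : ℚ :=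
  ∑ x ∈ X, ((hminus n h x : ℚ) + (hplus n h x : ℚ)) / 2

/-- `L(h, h′) = Σ_{q=1}^{N} (h⁻(q) − h⁺(q))·(h′⁻(q) + h′⁺(q))/2 ∈ ℚ`. -/
def LQ (n : Fin l → ℕ) (h h' : ℕ → ℤ) : ℚ :=
  ∑ q ∈ Finset.Icc 1 (cum n l),
    ((hminus n h q : ℚ) - (hplus n h q : ℚ)) * ((hminus n h' q : ℚ) + (hplus n h' q : ℚ)) / 2

/-- The number of inversions `inv(φ) = #{(i,j) ∈ S × S : i < j, φ(i) > φ(j)}`. -/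
def invCount (S : Finset ℕ) (f : ℕ → ℕ) : ℕ :=
  ((S ×ˢ S).filter fun p => p.1 < p.2 ∧ f p.2 < f p.1).card

/-- `ι(φ) = inv(φ) − m(S, [φ])`. -/
def iota (n : Fin l → ℕ) (S : Finset ℕ) (f : ℕ → ℕ) : ℚ :=
  (invCount S f : ℚ) - mQ n S (hcl S f)

/-- The grading `gr(S, T, φ) = (ι(φ), [φ]) ∈ Gr`. -/
def grD (n : Fin l → ℕ) (S : Finset ℕ) (f : ℕ → ℕ) : ℚ × (ℕ → ℤ) :=
  (iota n S f, hcl S f)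

/-- The multiplication of the grading group `Gr`:
`(a₁, h₁)·(a₂, h₂) = (a₁ + a₂ + L(h₁, h₂), h₁ + h₂)`. -/
def grMul (n : Fin l → ℕ) (x y : ℚ × (ℕ → ℤ)) : ℚ × (ℕ → ℤ) :=
  (x.1 + y.1 + LQ n x.2 y.2, fun p => x.2 p + y.2 p)

/-- The resolution of the inversion `(i, j)`: swap the values of `φ` at `i` and `j`. -/
def resolve (f : ℕ → ℕ) (i j : ℕ) (x : ℕ) : ℕ :=
  if x = i then f j else if x = j then f i else f x

end

section Aux
variable {l : ℕ}

lemma blockOf_mono (n : Fin l → ℕ) {i j : ℕ} (h : i ≤ j) : blockOf n i ≤ blockOf n j := by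
  apply Finset.card_le_card
  intro r hr
  simp only [Finset.mem_filter, Finset.mem_range] at *
  exact ⟨hr.1, by omega⟩

lemma hcl_eq_zero (n : Fin l → ℕ) (D : StrandDiagram n) {p : ℕ} (hp : ¬ Interior n p) :
    hcl D.S D.str p = 0 := by
  unfold hcl
  norm_cast
  rw [Finset.card_eq_zero, Finset.filter_eq_empty_iff]
  rintro i hi ⟨h1, h2⟩
  apply hp
  have hiS := D.S_sub hi
  simp only [Finset.mem_Icc] at hiS
  have hfT : D.str i ∈ D.T := D.bij.mapsTo hi
  have hfN := D.T_sub hfT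
  simp only [Finset.mem_Icc] at hfN
  have hb := D.block i hi
  have m1 : blockOf n i ≤ blockOf n p := blockOf_mono n h1
  have m2 : blockOf n p ≤ blockOf n (p+1) := blockOf_mono n (by omega)
  have m3 : blockOf n (p+1) ≤ blockOf n (D.str i) := blockOf_mono n (by omega)
  exact ⟨by omega, by omega, by omega⟩

lemma hminus_hcl (n : Fin l → ℕ) (D : StrandDiagram n) (q : ℕ) :
    hminus n (hcl D.S D.str) q = hcl D.S D.str (q-1) := by
  unfold hminus
  split_ifs with h
  · rfl
  · exact (hcl_eq_zero n D h).symm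

lemma hplus_hcl (n : Fin l → ℕ) (D : StrandDiagram n) (q : ℕ) :
    hplus n (hcl D.S D.str) q = hcl D.S D.str q := by
  unfold hplus
  split_ifs with h
  · rfl
  · exact (hcl_eq_zero n D h).symm

lemma hcl_eq_sum (S : Finset ℕ) (f : ℕ → ℕ) (p : ℕ) :
    hcl S f p = ∑ i ∈ S, if i ≤ p ∧ p < f i then (1:ℤ) else 0 := by
  unfold hcl
  rw [Finset.card_filter]
  push_cast
  rfl

lemma hcl_step (n : Fin l → ℕ) (D : StrandDiagram n) {q : ℕ} (hq : 1 ≤ q) :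
    hcl D.S D.str (q-1) + (if q ∈ D.S then (1:ℤ) else 0) =
    hcl D.S D.str q + (if q ∈ D.T then (1:ℤ) else 0) := by
  have hS : (if q ∈ D.S then (1:ℤ) else 0) = ∑ i ∈ D.S, if i = q then (1:ℤ) else 0 := by
    rw [Finset.sum_ite_eq' D.S q (fun _ => (1:ℤ))]
  have hT : (if q ∈ D.T then (1:ℤ) else 0) = ∑ i ∈ D.S, if D.str i = q then (1:ℤ) else 0 := by
    rw [show (∑ i ∈ D.S, if D.str i = q then (1:ℤ) else 0) =
        ∑ j ∈ D.T, if j = q then (1:ℤ) else 0 from ?_,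
      Finset.sum_ite_eq' D.T q (fun _ => (1:ℤ))]
    refine Finset.sum_bij (fun a _ => D.str a) (fun a ha => D.bij.mapsTo ha)
      (fun a₁ h₁ a₂ h₂ h => D.bij.injOn h₁ h₂ h) ?_ (fun a _ => rfl)
    intro b hb
    obtain ⟨a, ha, rfl⟩ := D.bij.surjOn hb
    exact ⟨a, ha, rfl⟩
  rw [hcl_eq_sum, hcl_eq_sum, hS, hT, ← Finset.sum_add_distrib, ← Finset.sum_add_distrib]
  apply Finset.sum_congr rfl
  intro i hi
  have hle := D.le_str i hi
  split_ifs <;> omega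

lemma hcl_comp (n : Fin l → ℕ) (D₁ D₂ : StrandDiagram n) (hTS : D₁.T = D₂.S) (p : ℕ) :
    hcl D₁.S (fun x => D₂.str (D₁.str x)) p = hcl D₁.S D₁.str p + hcl D₂.S D₂.str p := by
  have hmid : (∑ i ∈ D₁.S, if D₁.str i ≤ p ∧ p < D₂.str (D₁.str i) then (1:ℤ) else 0) =
      ∑ j ∈ D₂.S, if j ≤ p ∧ p < D₂.str j then (1:ℤ) else 0 := by
    refine Finset.sum_bij (fun a _ => D₁.str a)
      (fun a ha => by rw [← hTS]; exact D₁.bij.mapsTo ha)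
      (fun a₁ h₁ a₂ h₂ h => D₁.bij.injOn h₁ h₂ h) ?_ (fun a _ => rfl)
    intro b hb
    rw [← hTS] at hb
    obtain ⟨a, ha, rfl⟩ := D₁.bij.surjOn hb
    exact ⟨a, ha, rfl⟩
  rw [hcl_eq_sum, hcl_eq_sum, hcl_eq_sum, ← hmid, ← Finset.sum_add_distrib]
  apply Finset.sum_congr rfl
  intro i hi
  have h1 := D₁.le_str i hi
  have h2 : D₁.str i ≤ D₂.str (D₁.str i) := by
    apply D₂.le_str
    rw [← hTS]
    exact D₁.bij.mapsTo hi
  split_ifs <;> omega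

lemma mQ_add (n : Fin l → ℕ) (X : Finset ℕ) (h h' : ℕ → ℤ) :
    mQ n X (fun p => h p + h' p) = mQ n X h + mQ n X h' := by
  unfold mQ
  rw [← Finset.sum_add_distrib]
  apply Finset.sum_congr rfl
  intro x _
  have e1 : hminus n (fun p => h p + h' p) x = hminus n h x + hminus n h' x := by
    unfold hminus; split_ifs <;> simp
  have e2 : hplus n (fun p => h p + h' p) x = hplus n h x + hplus n h' x := by
    unfold hplus; split_ifs <;> simp
  rw [e1, e2]
  push_cast
  ring

lemma LQ_eq (n : Fin l → ℕ) (D₁ D₂ : StrandDiagram n) :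
    LQ n (hcl D₁.S D₁.str) (hcl D₂.S D₂.str) =
      mQ n D₁.T (hcl D₂.S D₂.str) - mQ n D₁.S (hcl D₂.S D₂.str) := by
  set h₂ := hcl D₂.S D₂.str with hh2
  set w : ℕ → ℚ := fun q => ((hminus n h₂ q : ℚ) + (hplus n h₂ q : ℚ)) / 2 with hw
  have key : LQ n (hcl D₁.S D₁.str) h₂ =
      ∑ q ∈ Finset.Icc 1 (cum n l),
        ((if q ∈ D₁.T then w q else 0) - (if q ∈ D₁.S then w q else 0)) := by
    unfold LQ
    apply Finset.sum_congr rfl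
    intro q hq
    simp only [Finset.mem_Icc] at hq
    have hst := hcl_step n D₁ hq.1
    have e : ((hminus n (hcl D₁.S D₁.str) q : ℚ) - (hplus n (hcl D₁.S D₁.str) q : ℚ)) =
        (if q ∈ D₁.T then (1:ℚ) else 0) - (if q ∈ D₁.S then (1:ℚ) else 0) := by
      rw [hminus_hcl, hplus_hcl]
      have : hcl D₁.S D₁.str (q-1) - hcl D₁.S D₁.str q =
          (if q ∈ D₁.T then (1:ℤ) else 0) - (if q ∈ D₁.S then (1:ℤ) else 0) := by omega
      rw [show ((hcl D₁.S D₁.str (q-1) : ℚ) - (hcl D₁.S D₁.str q : ℚ)) =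
        ((hcl D₁.S D₁.str (q-1) - hcl D₁.S D₁.str q : ℤ) : ℚ) by push_cast; ring, this]
      push_cast
      split_ifs <;> norm_num
    rw [e]
    show _ = (if q ∈ D₁.T then w q else 0) - (if q ∈ D₁.S then w q else 0)
    rw [hw]
    split_ifs <;> ring
  rw [key, Finset.sum_sub_distrib]
  congr 1
  · rw [Finset.sum_ite_mem, Finset.inter_eq_right.mpr D₁.T_sub]; rfl
  · rw [Finset.sum_ite_mem, Finset.inter_eq_right.mpr D₁.S_sub]; rfl

end Aux


/-- if `(S, T, φ)` and `(T, V, ψ)` are strand diagrams with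
`inv(ψ∘φ) = inv(φ) + inv(ψ)` (so that their product in the strands algebra is the
nonzero generator `(S, V, ψ∘φ)`), then `gr((S, V, ψ∘φ)) = gr((S, T, φ)) · gr((T, V, ψ))`
in the grading group `Gr`: the grading is multiplicative on nonzero products of
generators of the strands algebra. -/
theorem gr_multiplicative (l : ℕ) (n : Fin l → ℕ) (D₁ D₂ : StrandDiagram n)
    (hTS : D₁.T = D₂.S)
    (hinv : invCount D₁.S (fun x => D₂.str (D₁.str x)) =
      invCount D₁.S D₁.str + invCount D₂.S D₂.str) :
    grD n D₁.S (fun x => D₂.str (D₁.str x)) =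
      grMul n (grD n D₁.S D₁.str) (grD n D₂.S D₂.str) := by
  have hcomp : hcl D₁.S (fun x => D₂.str (D₁.str x)) =
      fun p => hcl D₁.S D₁.str p + hcl D₂.S D₂.str p :=
    funext (hcl_comp n D₁ D₂ hTS)
  unfold grD grMul iota
  refine Prod.ext ?_ ?_
  · show (invCount D₁.S (fun x => D₂.str (D₁.str x)) : ℚ) -
      mQ n D₁.S (hcl D₁.S (fun x => D₂.str (D₁.str x))) = _
    rw [hcomp, mQ_add, hinv]
    have hL := LQ_eq n D₁ D₂
    rw [hTS] at hL
    push_cast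
    linarith [hL]
  · exact hcomp
end

section
/- Fix block data n₁, …, n_l, the grading group Gr with central element λ = (1, 0), and the grading gr of strand diagrams as in the context. Let (S, T, φ) be a strand diagram and (i, j) ∈ Inv(φ) an inversion whose resolution satisfies inv(φ_{i,j}) = inv(φ) − 1. Then gr((S, T, φ_{i,j})) = λ⁻¹ · gr((S, T, φ)) in Gr; that is, ι drops by exactly 1 and the homological component is unchanged. Hence every generator appearing in the differential ∂(S, T, φ) has grading λ⁻¹ · gr((S, T, φ)): the differential of the strands algebra A(n₁, …, n_l; k) drops the grading by the central element λ. -/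
open Finset

attribute [local instance] Classical.propDecidable

/-- if `(i, j) ∈ Inv(φ)` is an inversion of the strand diagram `(S, T, φ)`
whose resolution satisfies `inv(φ_{i,j}) = inv(φ) − 1`, then
`gr((S, T, φ_{i,j})) = λ⁻¹ · gr((S, T, φ))` in `Gr`, where `λ = (1, 0)` is the central
element (so `λ⁻¹ = (−1, 0)`): `ι` drops by exactly `1` and the homological component is
unchanged.  Hence the differential of the strands algebra drops the grading by `λ`. -/
theorem gr_resolution_drops_by_lambda (l : ℕ) (n : Fin l → ℕ) (D : StrandDiagram n)
    (i j : ℕ) (hi : i ∈ D.S) (hj : j ∈ D.S) (hij : i < j) (hstr : D.str j < D.str i)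
    (hdrop : invCount D.S (resolve D.str i j) + 1 = invCount D.S D.str) :
    grD n D.S (resolve D.str i j) =
      grMul n (-1, fun _ => 0) (grD n D.S D.str) := by
  have hjle : j ≤ D.str j := D.le_str j hj
  have hne : j ≠ i := Nat.ne_of_gt hij
  have hilt : i < D.str j := lt_of_lt_of_le hij hjle
  have hhcl : ∀ p, hcl D.S (resolve D.str i j) p = hcl D.S D.str p := by
    intro p
    unfold hcl
    congr 1
    rw [Finset.card_filter, Finset.card_filter]
    have hj' : j ∈ D.S.erase i := Finset.mem_erase.mpr ⟨hne, hj⟩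
    rw [← Finset.add_sum_erase _ _ hi, ← Finset.add_sum_erase _ _ hi,
        ← Finset.add_sum_erase _ _ hj', ← Finset.add_sum_erase _ _ hj']
    have hsum : ∑ x ∈ (D.S.erase i).erase j,
          (if x ≤ p ∧ p < resolve D.str i j x then 1 else 0)
        = ∑ x ∈ (D.S.erase i).erase j, (if x ≤ p ∧ p < D.str x then 1 else 0) := by
      apply Finset.sum_congr rfl
      intro x hx
      simp only [Finset.mem_erase] at hx
      simp [resolve, hx.1, hx.2.1]
    rw [hsum]
    have h1 : resolve D.str i j i = D.str j := by simp [resolve]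
    have h2 : resolve D.str i j j = D.str i := by simp [resolve, hne]
    rw [h1, h2]
    split_ifs <;> omega
  have hfun : hcl D.S (resolve D.str i j) = hcl D.S D.str := funext hhcl
  have hLQ : LQ n (fun _ => (0 : ℤ)) (hcl D.S D.str) = 0 := by
    unfold LQ hminus hplus
    simp
  have hinv : (invCount D.S (resolve D.str i j) : ℚ) = (invCount D.S D.str : ℚ) - 1 := by
    have := hdrop
    push_cast [← this]
    ring
  unfold grD grMul
  apply Prod.ext
  · simp only
    unfold iota
    rw [hfun, hLQ, hinv]
    ring
  · simp only
    funext p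
    rw [hfun]
    simp
end

section
/- Let k be a commutative ring of characteristic 2, A a differential graded algebra over k with differential μ₁ and multiplication μ₂, and let (N, δ), (N′, δ′), (N″, δ″), (N‴, δ‴) be left type D structures over A. For a k-linear map f : N → A ⊗_k N′ define Df = (μ₁ ⊗ id_{N′}) ∘ f + (μ₂ ⊗ id_{N′}) ∘ (id_A ⊗ δ′) ∘ f + (μ₂ ⊗ id_{N′}) ∘ (id_A ⊗ f) ∘ δ, and for g : N′ → A ⊗_k N″ define the composition f ⊚ g = (μ₂ ⊗ id_{N″}) ∘ (id_A ⊗ g) ∘ f : N → A ⊗_k N″. Then: (i) D(Df) = 0, so Hom_k(N, A ⊗_k N′) with differential D is a chain complex; (ii) D(f ⊚ g) = (Df) ⊚ g + f ⊚ (Dg); (iii) composition is associative: (f ⊚ g) ⊚ h = f ⊚ (g ⊚ h) for any h : N″ → A ⊗_k N‴. Hence type D structures over A, with these hom-complexes and this composition, form a differential graded category. -/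
open TensorProduct

noncomputable section

variable (k : Type*) [CommRing k]
variable (A : Type*) [Ring A] [Algebra k A]

/-- The operator `(μ₂ ⊗ id) ∘ (id_A ⊗ g) : A ⊗ N → A ⊗ N'` built from
`g : N → A ⊗ N'`. -/
def mulStep (N : Type*) [AddCommGroup N] [Module k N]
    (N' : Type*) [AddCommGroup N'] [Module k N']
    (g : N →ₗ[k] A ⊗[k] N') : A ⊗[k] N →ₗ[k] A ⊗[k] N' :=
  LinearMap.rTensor N' (LinearMap.mul' k A) ∘ₗ
    (TensorProduct.assoc k A A N').symm.toLinearMap ∘ₗ LinearMap.lTensor A g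

/-- The type D structure compatibility condition. -/
def IsTypeD (μ₁ : A →ₗ[k] A) {N : Type*} [AddCommGroup N] [Module k N]
    (δ : N →ₗ[k] A ⊗[k] N) : Prop :=
  LinearMap.rTensor N μ₁ ∘ₗ δ + mulStep k A N N δ ∘ₗ δ = 0

/-- The differential `D` on the morphism complex `Hom(N, A ⊗ N')`:
`Df = (μ₁ ⊗ id) ∘ f + (μ₂ ⊗ id) ∘ (id ⊗ δ') ∘ f + (μ₂ ⊗ id) ∘ (id ⊗ f) ∘ δ`. -/
def DOp (μ₁ : A →ₗ[k] A)
    {N : Type*} [AddCommGroup N] [Module k N]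
    {N' : Type*} [AddCommGroup N'] [Module k N']
    (δ : N →ₗ[k] A ⊗[k] N) (δ' : N' →ₗ[k] A ⊗[k] N')
    (f : N →ₗ[k] A ⊗[k] N') : N →ₗ[k] A ⊗[k] N' :=
  LinearMap.rTensor N' μ₁ ∘ₗ f + mulStep k A N' N' δ' ∘ₗ f + mulStep k A N N' f ∘ₗ δ

/-- The composition `f ⊚ g = (μ₂ ⊗ id) ∘ (id_A ⊗ g) ∘ f` of type D structure morphisms. -/
def compD {N : Type*} [AddCommGroup N] [Module k N]
    {N' : Type*} [AddCommGroup N'] [Module k N']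
    {N'' : Type*} [AddCommGroup N''] [Module k N'']
    (f : N →ₗ[k] A ⊗[k] N') (g : N' →ₗ[k] A ⊗[k] N'') : N →ₗ[k] A ⊗[k] N'' :=
  mulStep k A N' N'' g ∘ₗ f

/-!
Write `x y` for `compD x y` and `d x` for `(μ₁ ⊗ id) ∘ x`, so that `D f = d f + f δ' + δ f` and
the type D condition reads `d δ + δ δ = 0`. Composition is associative because `(μ₂ ⊗ id) ∘ (id ⊗ g)`
commutes with left multiplication on the `A` factor, and the Leibniz rule for `μ₁` gives
`d (f g) = (d f) g + f (d g)`. Expanding `D (D f)` and `D (f g)` with these two rules, every term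
not killed by `d ∘ d = 0` or by the type D conditions occurs twice, hence vanishes in
characteristic 2.
-/

open LinearMap

theorem two_nsmul_eq_zero_of_charP_two [CharP k 2] {M : Type*} [AddCommGroup M] [Module k M]
    (x : M) : 2 • x = 0 := by
  rw [← Nat.cast_smul_eq_nsmul k, Nat.cast_ofNat, CharTwo.two_eq_zero, zero_smul]

section TypeD

variable {k A}
variable {N : Type*} [AddCommGroup N] [Module k N]
variable {N' : Type*} [AddCommGroup N'] [Module k N']
variable {N'' : Type*} [AddCommGroup N''] [Module k N'']
variable {N''' : Type*} [AddCommGroup N'''] [Module k N''']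

theorem mulStep_tmul (f : N →ₗ[k] A ⊗[k] N') (a : A) (n : N) :
    mulStep k A N N' f (a ⊗ₜ n) = rTensor N' (mulLeft k a) (f n) := by
  simp only [mulStep, coe_comp, Function.comp_apply, lTensor_tmul]
  induction f n using TensorProduct.induction_on with
  | zero => simp
  | tmul b m => simp [mul'_apply]
  | add x y hx hy => simp only [tmul_add, map_add, hx, hy]

theorem mulStep_rTensor_mulLeft (g : N' →ₗ[k] A ⊗[k] N'') (a : A) (x : A ⊗[k] N') :
    mulStep k A N' N'' g (rTensor N' (mulLeft k a) x) =
      rTensor N'' (mulLeft k a) (mulStep k A N' N'' g x) := by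
  induction x using TensorProduct.induction_on with
  | zero => simp
  | tmul b m =>
    simp only [rTensor_tmul, mulLeft_apply, mulStep_tmul, ← rTensor_comp_apply, mulLeft_mul]
  | add x y hx hy => simp only [map_add, hx, hy]

theorem mulStep_comp_mulStep (f : N →ₗ[k] A ⊗[k] N') (g : N' →ₗ[k] A ⊗[k] N'') :
    mulStep k A N' N'' g ∘ₗ mulStep k A N N' f = mulStep k A N N'' (compD k A f g) :=
  TensorProduct.ext' fun a n => by
    simp only [compD, coe_comp, Function.comp_apply, mulStep_tmul, mulStep_rTensor_mulLeft]

theorem mulStep_add (f g : N →ₗ[k] A ⊗[k] N') :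
    mulStep k A N N' (f + g) = mulStep k A N N' f + mulStep k A N N' g := by
  simp only [mulStep, lTensor_add, comp_add]

theorem rTensor_comp_mulStep (μ₁ : A →ₗ[k] A)
    (hLeib : ∀ a b : A, μ₁ (a * b) = μ₁ a * b + a * μ₁ b) (f : N →ₗ[k] A ⊗[k] N') :
    rTensor N' μ₁ ∘ₗ mulStep k A N N' f =
      mulStep k A N N' (rTensor N' μ₁ ∘ₗ f) + mulStep k A N N' f ∘ₗ rTensor N μ₁ := by
  refine TensorProduct.ext' fun a n => ?_
  have hμ₁ : μ₁ ∘ₗ mulLeft k a = mulLeft k a ∘ₗ μ₁ + mulLeft k (μ₁ a) := by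
    ext b
    simp [hLeib, add_comm]
  simp only [coe_comp, Function.comp_apply, LinearMap.add_apply, mulStep_tmul, rTensor_tmul]
  rw [← rTensor_comp_apply, hμ₁, rTensor_add, LinearMap.add_apply, rTensor_comp_apply]

theorem compD_assoc (f : N →ₗ[k] A ⊗[k] N') (g : N' →ₗ[k] A ⊗[k] N'')
    (h : N'' →ₗ[k] A ⊗[k] N''') :
    compD k A (compD k A f g) h = compD k A f (compD k A g h) := by
  rw [compD, compD, ← comp_assoc, mulStep_comp_mulStep]; rfl

theorem compD_add_left (f f' : N →ₗ[k] A ⊗[k] N') (g : N' →ₗ[k] A ⊗[k] N'') :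
    compD k A (f + f') g = compD k A f g + compD k A f' g :=
  LinearMap.comp_add _ _ _

theorem compD_add_right (f : N →ₗ[k] A ⊗[k] N') (g g' : N' →ₗ[k] A ⊗[k] N'') :
    compD k A f (g + g') = compD k A f g + compD k A f g' := by
  rw [compD, mulStep_add, add_comp]; rfl

theorem compD_zero_left (g : N' →ₗ[k] A ⊗[k] N'') :
    compD k A (0 : N →ₗ[k] A ⊗[k] N') g = 0 :=
  LinearMap.comp_zero _

theorem compD_zero_right (f : N →ₗ[k] A ⊗[k] N') :
    compD k A f (0 : N' →ₗ[k] A ⊗[k] N'') = 0 := by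
  rw [compD, mulStep, lTensor_zero, comp_zero, comp_zero, zero_comp]

theorem rTensor_comp_compD (μ₁ : A →ₗ[k] A)
    (hLeib : ∀ a b : A, μ₁ (a * b) = μ₁ a * b + a * μ₁ b)
    (f : N →ₗ[k] A ⊗[k] N') (g : N' →ₗ[k] A ⊗[k] N'') :
    rTensor N'' μ₁ ∘ₗ compD k A f g =
      compD k A f (rTensor N'' μ₁ ∘ₗ g) + compD k A (rTensor N' μ₁ ∘ₗ f) g := by
  rw [compD, ← comp_assoc, rTensor_comp_mulStep μ₁ hLeib, add_comp, comp_assoc]; rfl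

theorem rTensor_comp_rTensor_comp_eq_zero (μ₁ : A →ₗ[k] A) (hsq : μ₁ ∘ₗ μ₁ = 0)
    (f : N →ₗ[k] A ⊗[k] N') : rTensor N' μ₁ ∘ₗ rTensor N' μ₁ ∘ₗ f = 0 := by
  rw [← comp_assoc, ← rTensor_comp, hsq, rTensor_zero, zero_comp]

theorem DOp_eq (μ₁ : A →ₗ[k] A) (δ : N →ₗ[k] A ⊗[k] N) (δ' : N' →ₗ[k] A ⊗[k] N')
    (f : N →ₗ[k] A ⊗[k] N') :
    DOp k A μ₁ δ δ' f = rTensor N' μ₁ ∘ₗ f + compD k A f δ' + compD k A δ f :=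
  rfl

theorem isTypeD_iff (μ₁ : A →ₗ[k] A) (δ : N →ₗ[k] A ⊗[k] N) :
    IsTypeD k A μ₁ δ ↔ rTensor N μ₁ ∘ₗ δ + compD k A δ δ = 0 :=
  Iff.rfl

theorem DOp_DOp (μ₁ : A →ₗ[k] A) (hsq : μ₁ ∘ₗ μ₁ = 0)
    (hLeib : ∀ a b : A, μ₁ (a * b) = μ₁ a * b + a * μ₁ b)
    (δ : N →ₗ[k] A ⊗[k] N) (δ' : N' →ₗ[k] A ⊗[k] N') (f : N →ₗ[k] A ⊗[k] N') :
    DOp k A μ₁ δ δ' (DOp k A μ₁ δ δ' f) =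
      compD k A f (rTensor N' μ₁ ∘ₗ δ' + compD k A δ' δ') +
        compD k A (rTensor N μ₁ ∘ₗ δ + compD k A δ δ) f +
        2 • (compD k A (rTensor N' μ₁ ∘ₗ f) δ' + compD k A δ (rTensor N' μ₁ ∘ₗ f) +
          compD k A δ (compD k A f δ')) := by
  simp only [DOp_eq, comp_add, compD_add_left, compD_add_right, rTensor_comp_compD μ₁ hLeib,
    rTensor_comp_rTensor_comp_eq_zero μ₁ hsq, compD_assoc]
  abel

theorem DOp_compD (μ₁ : A →ₗ[k] A) (hLeib : ∀ a b : A, μ₁ (a * b) = μ₁ a * b + a * μ₁ b)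
    (δ : N →ₗ[k] A ⊗[k] N) (δ' : N' →ₗ[k] A ⊗[k] N') (δ'' : N'' →ₗ[k] A ⊗[k] N'')
    (f : N →ₗ[k] A ⊗[k] N') (g : N' →ₗ[k] A ⊗[k] N'') :
    DOp k A μ₁ δ δ'' (compD k A f g) + 2 • compD k A f (compD k A δ' g) =
      compD k A (DOp k A μ₁ δ δ' f) g + compD k A f (DOp k A μ₁ δ' δ'' g) := by
  simp only [DOp_eq, compD_add_left, compD_add_right, rTensor_comp_compD μ₁ hLeib, compD_assoc]
  abel

end TypeD

theorem typeD_dg_category [CharP k 2] (μ₁ : A →ₗ[k] A)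
    (hsq : μ₁ ∘ₗ μ₁ = 0)
    (hLeib : ∀ a b : A, μ₁ (a * b) = μ₁ a * b + a * μ₁ b)
    (N : Type*) [AddCommGroup N] [Module k N]
    (N' : Type*) [AddCommGroup N'] [Module k N']
    (N'' : Type*) [AddCommGroup N''] [Module k N'']
    (N''' : Type*) [AddCommGroup N'''] [Module k N''']
    (δ : N →ₗ[k] A ⊗[k] N) (δ' : N' →ₗ[k] A ⊗[k] N')
    (δ'' : N'' →ₗ[k] A ⊗[k] N'')
    (hδ : IsTypeD k A μ₁ δ) (hδ' : IsTypeD k A μ₁ δ') :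
    (∀ f : N →ₗ[k] A ⊗[k] N', DOp k A μ₁ δ δ' (DOp k A μ₁ δ δ' f) = 0) ∧
    (∀ (f : N →ₗ[k] A ⊗[k] N') (g : N' →ₗ[k] A ⊗[k] N''),
      DOp k A μ₁ δ δ'' (compD k A f g) =
        compD k A (DOp k A μ₁ δ δ' f) g + compD k A f (DOp k A μ₁ δ' δ'' g)) ∧
    (∀ (f : N →ₗ[k] A ⊗[k] N') (g : N' →ₗ[k] A ⊗[k] N'')
      (h : N'' →ₗ[k] A ⊗[k] N'''),
      compD k A (compD k A f g) h = compD k A f (compD k A g h)) := by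
  refine ⟨fun f => ?_, fun f g => ?_, fun f g h => compD_assoc f g h⟩
  · rw [DOp_DOp μ₁ hsq hLeib, (isTypeD_iff μ₁ δ).1 hδ, (isTypeD_iff μ₁ δ').1 hδ',
      compD_zero_left, compD_zero_right, zero_add, zero_add,
      two_nsmul_eq_zero_of_charP_two k (M := N →ₗ[k] A ⊗[k] N')]
  · rw [← DOp_compD μ₁ hLeib, two_nsmul_eq_zero_of_charP_two k (M := N →ₗ[k] A ⊗[k] N''), add_zero]

end
end
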